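/- Let 2 < p < ∞ and let X be a closed subspace of L_p. Then one of the following holds: (A) there is a constant M > 0 such that ‖v‖_{p/2} ≤ M·‖v‖_1 for all v ∈ V(X); or (B) no such constant M exists, in which case there exist pairwise disjoint measurable sets A_i ⊆ [0,1] and elements v_i ∈ V(X) (i ∈ ℕ) such that ‖1_{A_i}·v_i‖_{p/2} → 1 and ‖1_{[0,1]∖A_i}·v_i‖_{p/2} → 0 as i → ∞. -/

import Mathlib

/-!
If (A) fails, then for every `M` some `v ∈ V(X)` with `‖v‖_{p/2} = 1` has `‖v‖₁ < 1/M`, since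
`V(X)` is a cone. For such `v` and a large level `t`, Markov's inequality makes `{|v| ≥ t}` small,
while `∫_{|v| < t} |v|^{p/2} ≤ t^{p/2-1} ‖v‖₁` is small too: `|v|^{p/2}` is concentrated on a set
of small measure. Choose `v_n`, `B_n` inductively with mass `≤ 2^{-n}` of `|v_n|^{p/2}` off `B_n`,
each `B_m` so small that by absolute continuity every earlier `|v_n|^{p/2}` has mass `≤ 2^{-m}`
on it. Then the sets `A_n = B_n \ ⋃_{m>n} B_m` are disjoint and `|v_n|^{p/2}` has mass
`≤ 2^{1-n}` off `A_n`.
-/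

open MeasureTheory Filter Topology ENNReal

noncomputable section

/-- Lebesgue (probability) measure on `[0,1]`. -/
def μ01 : Measure ℝ := MeasureTheory.volume.restrict (Set.Icc 0 1)

/-- A sequence in a normed space is weakly null if it converges to `0` in the weak topology. -/
def WeaklyNull {E : Type*} [NormedAddCommGroup E] [NormedSpace ℝ E] (x : ℕ → E) : Prop :=
  ∀ φ : E →L[ℝ] ℝ, Tendsto (fun n => φ (x n)) atTop (𝓝 0)

/-- `x n → v` in the weak topology. -/
def WeakTendsto {E : Type*} [NormedAddCommGroup E] [NormedSpace ℝ E]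
    (x : ℕ → E) (v : E) : Prop :=
  ∀ φ : E →L[ℝ] ℝ, Tendsto (fun n => φ (x n)) atTop (𝓝 (φ v))

/-- `V(X)`: the set of limiting conditional variances of `X`, i.e. all `v ∈ L_{p/2}` which
are weak limits in `L_{p/2}` of the squares of a weakly null sequence in `X`. -/
def VX (p : ℝ≥0∞) [Fact (1 ≤ p)] [Fact (1 ≤ p / 2)] (X : Submodule ℝ (Lp ℝ p μ01)) :
    Set (Lp ℝ (p / 2) μ01) :=
  {v | ∃ x : ℕ → Lp ℝ p μ01, (∀ n, x n ∈ X) ∧ WeaklyNull x ∧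
    ∃ w : ℕ → Lp ℝ (p / 2) μ01,
      (∀ n, (⇑(w n) : ℝ → ℝ) =ᵐ[μ01] fun ω => ((x n : ℝ → ℝ) ω) ^ 2) ∧
      WeakTendsto w v}

theorem ENNReal.rpow_le_rpow_sub_one_mul_of_le {a t : ℝ≥0∞} {r : ℝ} (hr : 1 ≤ r)
    (hat : a ≤ t) : a ^ r ≤ t ^ (r - 1) * a := by
  calc a ^ r = a ^ (r - 1) * a := by
        simpa using (ENNReal.rpow_add_of_nonneg (x := a) (r - 1) 1 (by linarith) zero_le_one)
    _ ≤ t ^ (r - 1) * a := by gcongr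

section Concentration

variable {α E : Type*} [MeasurableSpace α] {μ : Measure α} [NormedAddCommGroup E]

theorem lintegral_enorm_rpow_eq_one {q : ℝ≥0∞} (hq0 : q ≠ 0) (hq : q ≠ ∞) {f : α → E}
    (hf : eLpNorm f q μ = 1) : ∫⁻ x, ‖f x‖ₑ ^ q.toReal ∂μ = 1 := by
  rw [lintegral_rpow_enorm_eq_rpow_eLpNorm' (ENNReal.toReal_pos hq0 hq),
    ← eLpNorm_eq_eLpNorm' hq0 hq, hf, ENNReal.one_rpow]

theorem exists_pos_forall_exists_measure_lt_setLIntegral_compl_lt {q : ℝ≥0∞} (hq1 : 1 ≤ q)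
    (hq : q ≠ ∞) {ε δ : ℝ≥0∞} (hε : 0 < ε) (hδ : 0 < δ) :
    ∃ η > 0, ∀ f : α → E, StronglyMeasurable f → eLpNorm f q μ = 1 → eLpNorm f 1 μ < η →
      ∃ B, MeasurableSet B ∧ μ B < δ ∧ ∫⁻ x in Bᶜ, ‖f x‖ₑ ^ q.toReal ∂μ < ε := by
  set r := q.toReal
  have hr1 : 1 ≤ r := by simpa using ENNReal.toReal_mono hq hq1
  have hr0 : 0 < r := by linarith
  obtain ⟨n, hn⟩ :=
    ENNReal.exists_inv_nat_lt (ENNReal.rpow_pos_of_nonneg hδ (inv_nonneg.2 hr0.le)).ne'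
  set t : ℝ≥0∞ := (n : ℝ≥0∞)
  have ht0 : t ≠ 0 := by rintro h; simp [t, h] at hn
  have ht : t ≠ ∞ := ENNReal.natCast_ne_top n
  have htr : t ^ (r - 1) ≠ 0 := (ENNReal.rpow_pos (pos_iff_ne_zero.2 ht0) ht).ne'
  have htr' : t ^ (r - 1) ≠ ∞ := ENNReal.rpow_ne_top_of_nonneg (by linarith) ht
  refine ⟨ε / t ^ (r - 1), ENNReal.div_pos hε.ne' htr', fun f hf hfq hf1 => ?_⟩
  refine ⟨{x | t ≤ ‖f x‖ₑ}, measurableSet_le measurable_const hf.enorm, ?_, ?_⟩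
  · calc μ {x | t ≤ ‖f x‖ₑ} ≤ t⁻¹ ^ r * eLpNorm f q μ ^ r :=
          meas_ge_le_mul_pow_eLpNorm_enorm μ (by positivity) hq hf.aestronglyMeasurable ht0
            (absurd · ht)
      _ < (δ ^ r⁻¹) ^ r := by rw [hfq, ENNReal.one_rpow, mul_one]; gcongr
      _ = δ := ENNReal.rpow_inv_rpow hr0.ne' δ
  · calc ∫⁻ x in {x | t ≤ ‖f x‖ₑ}ᶜ, ‖f x‖ₑ ^ r ∂μ
        ≤ ∫⁻ x in {x | t ≤ ‖f x‖ₑ}ᶜ, t ^ (r - 1) * ‖f x‖ₑ ∂μ := by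
          refine setLIntegral_mono' (measurableSet_le measurable_const hf.enorm).compl
            fun x hx => ENNReal.rpow_le_rpow_sub_one_mul_of_le hr1 (le_of_lt (not_le.1 hx))
      _ = t ^ (r - 1) * ∫⁻ x in {x | t ≤ ‖f x‖ₑ}ᶜ, ‖f x‖ₑ ∂μ := lintegral_const_mul' _ _ htr'
      _ ≤ t ^ (r - 1) * eLpNorm f 1 μ := by
          rw [eLpNorm_one_eq_lintegral_enorm]
          exact mul_le_mul_right (setLIntegral_le_lintegral _ _) _
      _ < t ^ (r - 1) * (ε / t ^ (r - 1)) := ENNReal.mul_lt_mul_right htr htr' hf1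
      _ ≤ ε := ENNReal.mul_div_le

end Concentration

open Function in
theorem pairwise_disjoint_diff_iUnion_add {α : Type*} (B : ℕ → Set α) :
    Pairwise (Disjoint on fun n => B n \ ⋃ j, B (n + 1 + j)) := by
  refine pairwise_disjoint_on _ |>.2 fun m n hmn => Set.disjoint_left.2 fun x hxm hxn => ?_
  refine hxm.2 (Set.mem_iUnion.2 ⟨n - m - 1, ?_⟩)
  rw [show m + 1 + (n - m - 1) = n by omega]
  exact hxn.1

section Disjointification

variable {α : Type*} [MeasurableSpace α] {μ : Measure α}

theorem setLIntegral_compl_diff_iUnion_add_le {g : α → ℝ≥0∞} {B : ℕ → Set α} {n : ℕ}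
    (hcompl : ∫⁻ x in (B n)ᶜ, g x ∂μ ≤ 2⁻¹ ^ n)
    (hlater : ∀ j, ∫⁻ x in B (n + 1 + j), g x ∂μ ≤ 2⁻¹ ^ (n + 1 + j)) :
    ∫⁻ x in (B n \ ⋃ j, B (n + 1 + j))ᶜ, g x ∂μ ≤ 2 * 2⁻¹ ^ n := by
  rw [Set.sdiff_eq, Set.compl_inter, compl_compl]
  calc ∫⁻ x in (B n)ᶜ ∪ ⋃ j, B (n + 1 + j), g x ∂μ
      ≤ ∫⁻ x in (B n)ᶜ, g x ∂μ + ∑' j, ∫⁻ x in B (n + 1 + j), g x ∂μ :=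
        (lintegral_union_le _ _ _).trans (by gcongr; exact lintegral_iUnion_le _ _)
    _ ≤ 2⁻¹ ^ n + ∑' j, (2⁻¹ : ℝ≥0∞) ^ (n + 1 + j) := by gcongr; exact hlater _
    _ = 2 * 2⁻¹ ^ n := by
        simp_rw [pow_add, ENNReal.tsum_mul_left, ENNReal.tsum_geometric, ENNReal.one_sub_inv_two,
          inv_inv, pow_one, mul_assoc, ENNReal.inv_mul_cancel two_ne_zero ofNat_ne_top, two_mul]
        ring

variable {ι : Type*} {F : ι → α → ℝ≥0∞}

theorem exists_setLIntegral_compl_lt_forall_setLIntegral_lt (hF : ∀ i, ∫⁻ x, F i x ∂μ ≠ ∞)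
    (hconc : ∀ ε δ : ℝ≥0∞, 0 < ε → 0 < δ →
      ∃ i B, MeasurableSet B ∧ μ B < δ ∧ ∫⁻ x in Bᶜ, F i x ∂μ < ε)
    (s : Finset ι) {ε : ℝ≥0∞} (hε : 0 < ε) :
    ∃ i B, MeasurableSet B ∧ ∫⁻ x in Bᶜ, F i x ∂μ < ε ∧ ∀ j ∈ s, ∫⁻ x in B, F j x ∂μ < ε := by
  choose δ hδ hδF using fun j => exists_pos_setLIntegral_lt_of_measure_lt (hF j) hε.ne'
  obtain ⟨i, B, hB, hμB, hBc⟩ :=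
    hconc ε (s.inf δ) hε (Finset.lt_inf_iff ENNReal.zero_lt_top |>.2 fun j _ => hδ j)
  exact ⟨i, B, hB, hBc, fun j hj => hδF j B (hμB.trans_le (Finset.inf_le hj))⟩

theorem exists_pairwise_disjoint_tendsto_setLIntegral_compl (hF : ∀ i, ∫⁻ x, F i x ∂μ ≠ ∞)
    (hconc : ∀ ε δ : ℝ≥0∞, 0 < ε → 0 < δ →
      ∃ i B, MeasurableSet B ∧ μ B < δ ∧ ∫⁻ x in Bᶜ, F i x ∂μ < ε) :
    ∃ (i : ℕ → ι) (A : ℕ → Set α), (∀ n, MeasurableSet (A n)) ∧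
      (Pairwise fun m n => Disjoint (A m) (A n)) ∧
      Tendsto (fun n => ∫⁻ x in (A n)ᶜ, F (i n) x ∂μ) atTop (𝓝 0) := by
  classical
  -- `(k, i, B)`: the set `B` leaves mass `≤ 2⁻¹ ^ k` of `F i` outside; `k` increases along the
  -- sequence and later sets carry mass `≤ 2⁻¹ ^ k` of earlier functions.
  obtain ⟨f, hP, hrel⟩ := exists_seq_of_forall_finset_exists
    (fun a : ℕ × ι × Set α => MeasurableSet a.2.2 ∧ ∫⁻ x in a.2.2ᶜ, F a.2.1 x ∂μ ≤ 2⁻¹ ^ a.1)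
    (fun a b => a.1 < b.1 ∧ ∫⁻ x in b.2.2, F a.2.1 x ∂μ ≤ 2⁻¹ ^ b.1) fun s _ => by
      obtain ⟨i, B, hB, hBc, hBs⟩ := exists_setLIntegral_compl_lt_forall_setLIntegral_lt hF hconc
        (s.image fun a => a.2.1) (ε := 2⁻¹ ^ (s.sup Prod.fst + 1))
        (ENNReal.pow_pos (by norm_num) _)
      exact ⟨(s.sup Prod.fst + 1, i, B), ⟨hB, hBc.le⟩, fun a ha =>
        ⟨Nat.lt_succ_of_le (Finset.le_sup ha), (hBs _ (Finset.mem_image_of_mem _ ha)).le⟩⟩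
  have hk : StrictMono fun n => (f n).1 := fun m n hmn => (hrel m n hmn).1
  have hpow (n : ℕ) : (2⁻¹ : ℝ≥0∞) ^ (f n).1 ≤ 2⁻¹ ^ n :=
    pow_le_pow_right_of_le_one' (by norm_num) hk.le_apply
  refine ⟨fun n => (f n).2.1, fun n => (f n).2.2 \ ⋃ j, (f (n + 1 + j)).2.2,
    fun n => (hP n).1.diff (.iUnion fun j => (hP _).1), pairwise_disjoint_diff_iUnion_add _, ?_⟩
  refine tendsto_of_tendsto_of_tendsto_of_le_of_le tendsto_const_nhds ?_ (fun _ => bot_le)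
    fun n => setLIntegral_compl_diff_iUnion_add_le (B := fun n => (f n).2.2)
      ((hP n).2.trans (hpow n)) fun j => (hrel n _ (by omega)).2.trans (hpow _)
  simpa using ENNReal.Tendsto.const_mul
    (ENNReal.tendsto_pow_atTop_nhds_zero_of_lt_one (ENNReal.inv_lt_one.2 one_lt_two))
    (Or.inr ofNat_ne_top)

end Disjointification

section Indicator

variable {α E : Type*} [MeasurableSpace α] {μ : Measure α} [NormedAddCommGroup E]

theorem tendsto_eLpNorm_indicator_of_tendsto_setLIntegral_compl {q : ℝ≥0∞} (hq0 : q ≠ 0)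
    (hq : q ≠ ∞) {f : ℕ → α → E} (hf : ∀ n, eLpNorm (f n) q μ = 1) {A : ℕ → Set α}
    (hA : ∀ n, MeasurableSet (A n))
    (h : Tendsto (fun n => ∫⁻ x in (A n)ᶜ, ‖f n x‖ₑ ^ q.toReal ∂μ) atTop (𝓝 0)) :
    Tendsto (fun n => eLpNorm ((A n).indicator (f n)) q μ) atTop (𝓝 1) ∧
      Tendsto (fun n => eLpNorm ((A n)ᶜ.indicator (f n)) q μ) atTop (𝓝 0) := by
  have hnorm {S : Set α} (hS : MeasurableSet S) (n : ℕ) : eLpNorm (S.indicator (f n)) q μ =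
      (∫⁻ x in S, ‖f n x‖ₑ ^ q.toReal ∂μ) ^ q.toReal⁻¹ := by
    rw [eLpNorm_indicator_eq_eLpNorm_restrict hS, eLpNorm_eq_lintegral_rpow_enorm_toReal hq0 hq,
      one_div]
  have hsplit (n : ℕ) : ∫⁻ x in A n, ‖f n x‖ₑ ^ q.toReal ∂μ =
      1 - ∫⁻ x in (A n)ᶜ, ‖f n x‖ₑ ^ q.toReal ∂μ := by
    refine ENNReal.eq_sub_of_add_eq ?_ ?_
    · refine ((setLIntegral_le_lintegral _ _).trans_lt ?_).ne
      rw [lintegral_enorm_rpow_eq_one hq0 hq (hf n)]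
      exact one_lt_top
    · rw [lintegral_add_compl _ (hA n), lintegral_enorm_rpow_eq_one hq0 hq (hf n)]
  have hcont := (ENNReal.continuous_rpow_const (y := q.toReal⁻¹)).tendsto
  constructor
  · simp_rw [hnorm (hA _), hsplit]
    have h1 := ENNReal.Tendsto.sub tendsto_const_nhds h (.inl one_ne_top)
    rw [tsub_zero] at h1
    simpa [Function.comp_def] using (hcont 1).comp h1
  · simp_rw [hnorm (hA _).compl]
    simpa [Function.comp_def, ENNReal.toReal_pos hq0 hq] using (hcont 0).comp h

end Indicator

instance : IsFiniteMeasure μ01 := by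
  unfold μ01; infer_instance

theorem Icc_ae_eq_univ : Set.Icc (0 : ℝ) 1 =ᵐ[μ01] Set.univ :=
  ae_eq_univ.2 (ae_restrict_mem measurableSet_Icc)

theorem eLpNorm_inter_Icc_indicator (s : Set ℝ) (f : ℝ → ℝ) (q : ℝ≥0∞) :
    eLpNorm ((s ∩ Set.Icc 0 1).indicator f) q μ01 = eLpNorm (s.indicator f) q μ01 :=
  eLpNorm_congr_ae <| indicator_ae_eq_of_ae_eq_set <|
    inter_ae_eq_left_of_ae_eq_univ Icc_ae_eq_univ

theorem eLpNorm_Icc_diff_indicator (s : Set ℝ) (f : ℝ → ℝ) (q : ℝ≥0∞) :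
    eLpNorm ((Set.Icc 0 1 \ s).indicator f) q μ01 = eLpNorm (sᶜ.indicator f) q μ01 := by
  refine eLpNorm_congr_ae <| indicator_ae_eq_of_ae_eq_set ?_
  rw [Set.sdiff_eq]
  exact inter_ae_eq_right_of_ae_eq_univ Icc_ae_eq_univ

section VX

variable (p : ℝ≥0∞) [Fact (1 ≤ p)] [Fact (1 ≤ p / 2)] (X : Submodule ℝ (Lp ℝ p μ01))

theorem smul_mem_VX {v : Lp ℝ (p / 2) μ01} (hv : v ∈ VX p X) {c : ℝ} (hc : 0 ≤ c) :
    c • v ∈ VX p X := by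
  obtain ⟨x, hxX, hxnull, w, hw, hwlim⟩ := hv
  refine ⟨fun n => √c • x n, fun n => X.smul_mem _ (hxX n), fun φ => ?_, fun n => c • w n,
    fun n => ?_, fun φ => ?_⟩
  · simpa using (hxnull φ).const_mul √c
  · filter_upwards [Lp.coeFn_smul c (w n), hw n, Lp.coeFn_smul √c (x n)] with ω hcw hw hcx
    simp [hcw, hw, hcx, mul_pow, Real.sq_sqrt hc]
  · simpa using (hwlim φ).const_mul c

theorem exists_mem_VX_eLpNorm_eq_one_eLpNorm_one_lt
    (hA : ¬ ∃ M > (0:ℝ), ∀ v ∈ VX p X, ‖v‖ ≤ M * (eLpNorm (⇑v) 1 μ01).toReal)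
    {η : ℝ≥0∞} (hη : 0 < η) :
    ∃ u ∈ VX p X, eLpNorm u (p / 2) μ01 = 1 ∧ eLpNorm u 1 μ01 < η := by
  obtain ⟨n, hn⟩ := ENNReal.exists_inv_nat_lt hη.ne'
  have hn0 : (0 : ℝ) < n := Nat.cast_pos.2 <| Nat.pos_of_ne_zero fun h => by simp [h] at hn
  push Not at hA
  obtain ⟨v, hv, hlt⟩ := hA n hn0
  have hv0 : 0 < ‖v‖ := lt_of_le_of_lt (by positivity) hlt
  have hv1 : eLpNorm v 1 μ01 ≠ ∞ :=
    ((Lp.memLp v).mono_exponent (Fact.out : 1 ≤ p / 2)).eLpNorm_ne_top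
  refine ⟨‖v‖⁻¹ • v, smul_mem_VX p X hv (inv_nonneg.2 hv0.le), ?_, ?_⟩
  · rw [← ENNReal.toReal_eq_one_iff, ← Lp.norm_def, norm_smul, norm_inv, norm_norm,
      inv_mul_cancel₀ hv0.ne']
  rw [eLpNorm_congr_ae (Lp.coeFn_smul _ _), eLpNorm_const_smul, ← ENNReal.ofReal_toReal hv1,
    Real.enorm_eq_ofReal (inv_nonneg.2 hv0.le), ← ENNReal.ofReal_mul (inv_nonneg.2 hv0.le)]
  calc ENNReal.ofReal (‖v‖⁻¹ * (eLpNorm v 1 μ01).toReal) < ENNReal.ofReal (n : ℝ)⁻¹ := by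
        rw [ENNReal.ofReal_lt_ofReal_iff (by positivity), inv_mul_lt_iff₀ hv0,
          lt_mul_inv_iff₀ hn0]
        linarith
    _ = (n : ℝ≥0∞)⁻¹ := by rw [ENNReal.ofReal_inv_of_pos hn0, ENNReal.ofReal_natCast]
    _ < η := hn

theorem exists_mem_VX_eLpNorm_eq_one_measure_lt_setLIntegral_compl_lt (hp : p ≠ ∞)
    (hA : ¬ ∃ M > (0:ℝ), ∀ v ∈ VX p X, ‖v‖ ≤ M * (eLpNorm (⇑v) 1 μ01).toReal)
    {ε δ : ℝ≥0∞} (hε : 0 < ε) (hδ : 0 < δ) :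
    ∃ u ∈ VX p X, eLpNorm u (p / 2) μ01 = 1 ∧ ∃ B, MeasurableSet B ∧ μ01 B < δ ∧
      ∫⁻ x in Bᶜ, ‖u x‖ₑ ^ (p / 2).toReal ∂μ01 < ε := by
  obtain ⟨η, hη, hconc⟩ := exists_pos_forall_exists_measure_lt_setLIntegral_compl_lt (μ := μ01)
    (E := ℝ) Fact.out (ENNReal.div_ne_top hp two_ne_zero) hε hδ
  obtain ⟨u, hu, hu1, huη⟩ := exists_mem_VX_eLpNorm_eq_one_eLpNorm_one_lt p X hA hη
  exact ⟨u, hu, hu1, hconc u (Lp.stronglyMeasurable u) hu1 huη⟩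

end VX

theorem statement4_general (p : ℝ≥0∞) [Fact (1 ≤ p)] [Fact (1 ≤ p / 2)] (hp' : p ≠ ⊤)
    (X : Submodule ℝ (Lp ℝ p μ01)) :
    (∃ M > (0:ℝ), ∀ v ∈ VX p X, ‖v‖ ≤ M * (eLpNorm (⇑v) 1 μ01).toReal) ∨
    ((¬ ∃ M > (0:ℝ), ∀ v ∈ VX p X, ‖v‖ ≤ M * (eLpNorm (⇑v) 1 μ01).toReal) ∧
      ∃ (A : ℕ → Set ℝ) (v : ℕ → Lp ℝ (p / 2) μ01),
        (∀ i, MeasurableSet (A i)) ∧ (∀ i, A i ⊆ Set.Icc (0:ℝ) 1) ∧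
        (Pairwise fun i j => Disjoint (A i) (A j)) ∧
        (∀ i, v i ∈ VX p X) ∧
        Tendsto (fun i => (eLpNorm ((A i).indicator (⇑(v i))) (p / 2) μ01).toReal)
          atTop (𝓝 1) ∧
        Tendsto
          (fun i => (eLpNorm ((Set.Icc (0:ℝ) 1 \ A i).indicator (⇑(v i))) (p / 2) μ01).toReal)
          atTop (𝓝 0)) := by
  by_cases hM : ∃ M > (0:ℝ), ∀ v ∈ VX p X, ‖v‖ ≤ M * (eLpNorm (⇑v) 1 μ01).toReal
  · exact .inl hM
  refine .inr ⟨hM, ?_⟩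
  have hq : p / 2 ≠ ∞ := ENNReal.div_ne_top hp' two_ne_zero
  have hq0 : p / 2 ≠ 0 := (zero_lt_one.trans_le Fact.out).ne'
  obtain ⟨u, A, hA, hdisj, hlim⟩ := exists_pairwise_disjoint_tendsto_setLIntegral_compl
    (μ := μ01) (F := fun (u : {u // u ∈ VX p X ∧ eLpNorm u (p / 2) μ01 = 1}) x =>
      ‖(u : Lp ℝ (p / 2) μ01) x‖ₑ ^ (p / 2).toReal)
    (fun u => by rw [lintegral_enorm_rpow_eq_one hq0 hq u.2.2]; exact one_ne_top)
    fun ε δ hε hδ => by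
      obtain ⟨u, hu, hu1, hB⟩ :=
        exists_mem_VX_eLpNorm_eq_one_measure_lt_setLIntegral_compl_lt p X hp' hM hε hδ
      exact ⟨⟨u, hu, hu1⟩, hB⟩
  obtain ⟨h1, h0⟩ :=
    tendsto_eLpNorm_indicator_of_tendsto_setLIntegral_compl hq0 hq (fun n => (u n).2.2) hA hlim
  refine ⟨fun n => A n ∩ Set.Icc 0 1, fun n => (u n).1, fun n => (hA n).inter measurableSet_Icc,
    fun n => Set.inter_subset_right, fun m n hmn => (hdisj hmn).mono inf_le_left inf_le_left,
    fun n => (u n).2.1, ?_, ?_⟩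
  · simpa [Function.comp_def, eLpNorm_inter_Icc_indicator]
      using (ENNReal.tendsto_toReal one_ne_top).comp h1
  · simpa [Function.comp_def, eLpNorm_Icc_diff_indicator]
      using (ENNReal.tendsto_toReal zero_ne_top).comp h0

theorem statement4 (p : ℝ≥0∞) [Fact (1 ≤ p)] [Fact (1 ≤ p / 2)] (hp : 2 < p) (hp' : p ≠ ⊤)
    (X : Submodule ℝ (Lp ℝ p μ01)) (hX : IsClosed (X : Set (Lp ℝ p μ01))) :
    (∃ M > (0:ℝ), ∀ v ∈ VX p X, ‖v‖ ≤ M * (eLpNorm (⇑v) 1 μ01).toReal) ∨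
    ((¬ ∃ M > (0:ℝ), ∀ v ∈ VX p X, ‖v‖ ≤ M * (eLpNorm (⇑v) 1 μ01).toReal) ∧
      ∃ (A : ℕ → Set ℝ) (v : ℕ → Lp ℝ (p / 2) μ01),
        (∀ i, MeasurableSet (A i)) ∧ (∀ i, A i ⊆ Set.Icc (0:ℝ) 1) ∧
        (Pairwise fun i j => Disjoint (A i) (A j)) ∧
        (∀ i, v i ∈ VX p X) ∧
        Tendsto (fun i => (eLpNorm ((A i).indicator (⇑(v i))) (p / 2) μ01).toReal)
          atTop (𝓝 1) ∧
        Tendsto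
          (fun i => (eLpNorm ((Set.Icc (0:ℝ) 1 \ A i).indicator (⇑(v i))) (p / 2) μ01).toReal)
          atTop (𝓝 0)) :=
  statement4_general p hp' X

end
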